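/- arXiv:2411.15977 — 8 statements merged into one kernel-verified Lean document; each statement's English description precedes it below -/
import Mathlib

section
/- Let G be a group and A, C subgroups of G with A ∩ C = {1}. Let Γ := (A*C) ∩ (C*A) denote the set of decomposable elements (where A*C := {a*c : a ∈ A, c ∈ C}), and let A₀ := A ∩ N(C), where N(C) := {g ∈ G : g*C*g⁻¹ = C} is the normalizer of C. Then multiplication by A₀ preserves the set of decomposable elements: {a₀*γ : a₀ ∈ A₀, γ ∈ Γ} = Γ and {γ*a₀ : a₀ ∈ A₀, γ ∈ Γ} = Γ. -/
/-!
Everything happens at the level of pointwise products of subsets of `G`. Left multiplication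
by `A₀ ⊆ A` visibly preserves `A * C`, and it preserves `C * A` because `A₀` normalizes `C`,
so that `A₀ * C = C * A₀` and `A₀ * (C * A) = C * (A₀ * A) ⊆ C * A`; right multiplication is
symmetric. Since `1 ∈ A₀`, the inclusion `A₀ * Γ ⊆ Γ` is an equality.
-/

open Pointwise

theorem Set.setOf_exists_mul_eq {M : Type*} [Mul M] (s t : Set M) :
    {g | ∃ a ∈ s, ∃ b ∈ t, g = a * b} = s * t := by
  ext g
  simp only [Set.mem_ofPred_eq, Set.mem_mul, eq_comm]

theorem Set.setOf_exists_mul_eq' {M : Type*} [Mul M] (s t : Set M) :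
    {g | ∃ b ∈ t, ∃ a ∈ s, g = a * b} = s * t := by
  rw [← Set.setOf_exists_mul_eq]
  ext g
  exact ⟨fun ⟨b, hb, a, ha, h⟩ => ⟨a, ha, b, hb, h⟩, fun ⟨a, ha, b, hb, h⟩ => ⟨b, hb, a, ha, h⟩⟩

namespace Subgroup

variable {G : Type*} [Group G]

theorem coe_mul_eq_of_coe_mul_subset {H : Subgroup G} {S : Set G} (h : (H : Set G) * S ⊆ S) :
    (H : Set G) * S = S :=
  h.antisymm (Set.subset_mul_right S H.one_mem)

theorem mul_coe_eq_of_mul_coe_subset {H : Subgroup G} {S : Set G} (h : S * (H : Set G) ⊆ S) :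
    S * (H : Set G) = S :=
  h.antisymm (Set.subset_mul_left S H.one_mem)

variable {A C N : Subgroup G}

theorem coe_mul_coe_subset_of_le_left (hNA : N ≤ A) : (N : Set G) * A ⊆ A :=
  (Set.mul_subset_mul_right hNA).trans A.coe_mul_self_eq.subset

theorem coe_mul_coe_subset_of_le_right (hNA : N ≤ A) : (A : Set G) * N ⊆ A :=
  (Set.mul_subset_mul_left hNA).trans A.coe_mul_self_eq.subset

theorem coe_mul_coe_mul_subset_of_le (hNA : N ≤ A) (S : Set G) :
    (N : Set G) * (A * S) ⊆ A * S := by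
  rw [← mul_assoc]
  exact Set.mul_subset_mul_right (coe_mul_coe_subset_of_le_left hNA)

theorem mul_coe_mul_coe_subset_of_le (hNA : N ≤ A) (S : Set G) :
    S * A * (N : Set G) ⊆ S * A := by
  rw [mul_assoc]
  exact Set.mul_subset_mul_left (coe_mul_coe_subset_of_le_right hNA)

theorem coe_mul_mul_coe_subset (hNA : N ≤ A) (hNC : N ≤ normalizer (C : Set G)) :
    (N : Set G) * (C * A) ⊆ C * A := by
  rw [← mul_assoc, set_mul_normalizer_comm _ _ hNC, mul_assoc]
  exact Set.mul_subset_mul_left (coe_mul_coe_subset_of_le_left hNA)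

theorem mul_coe_mul_coe_subset (hNA : N ≤ A) (hNC : N ≤ normalizer (C : Set G)) :
    (A : Set G) * C * N ⊆ A * C := by
  rw [mul_assoc, ← set_mul_normalizer_comm _ _ hNC, ← mul_assoc]
  exact Set.mul_subset_mul_right (coe_mul_coe_subset_of_le_right hNA)

theorem coe_mul_inter_eq_of_le_normalizer (hNA : N ≤ A) (hNC : N ≤ normalizer (C : Set G)) :
    (N : Set G) * ((A : Set G) * C ∩ (C * A)) = (A : Set G) * C ∩ (C * A) :=
  coe_mul_eq_of_coe_mul_subset <| Set.mul_inter_subset.trans <|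
    Set.inter_subset_inter (coe_mul_coe_mul_subset_of_le hNA _) (coe_mul_mul_coe_subset hNA hNC)

theorem inter_mul_coe_eq_of_le_normalizer (hNA : N ≤ A) (hNC : N ≤ normalizer (C : Set G)) :
    ((A : Set G) * C ∩ (C * A)) * N = (A : Set G) * C ∩ (C * A) :=
  mul_coe_eq_of_mul_coe_subset <| Set.inter_mul_subset.trans <|
    Set.inter_subset_inter (mul_coe_mul_coe_subset hNA hNC) (mul_coe_mul_coe_subset_of_le hNA _)

end Subgroup

theorem stmt0_general {G : Type*} [Group G] (A C : Subgroup G)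
    (Γ : Set G)
    (hΓ : Γ = {g | ∃ a ∈ A, ∃ c ∈ C, g = a * c} ∩ {g | ∃ c ∈ C, ∃ a ∈ A, g = c * a})
    (A₀ : Subgroup G) (hA₀ : A₀ = A ⊓ Subgroup.normalizer (C : Set G)) :
    {g | ∃ a₀ ∈ A₀, ∃ γ ∈ Γ, g = a₀ * γ} = Γ ∧
    {g | ∃ a₀ ∈ A₀, ∃ γ ∈ Γ, g = γ * a₀} = Γ := by
  have hA₀A : A₀ ≤ A := hA₀ ▸ inf_le_left
  have hA₀C : A₀ ≤ Subgroup.normalizer (C : Set G) := hA₀ ▸ inf_le_right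
  subst hΓ
  simp only [← SetLike.mem_coe, Set.setOf_exists_mul_eq, Set.setOf_exists_mul_eq']
  exact ⟨Subgroup.coe_mul_inter_eq_of_le_normalizer hA₀A hA₀C,
    Subgroup.inter_mul_coe_eq_of_le_normalizer hA₀A hA₀C⟩

/-- Multiplication by `A₀ = A ∩ N(C)` preserves the set `Γ = (A*C) ∩ (C*A)` of
decomposable elements (Proposition 2.2 (1)). -/
theorem stmt0 {G : Type*} [Group G] (A C : Subgroup G)
    (hAC : A ⊓ C = ⊥)
    (Γ : Set G)
    (hΓ : Γ = {g | ∃ a ∈ A, ∃ c ∈ C, g = a * c} ∩ {g | ∃ c ∈ C, ∃ a ∈ A, g = c * a})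
    (A₀ : Subgroup G) (hA₀ : A₀ = A ⊓ Subgroup.normalizer (C : Set G)) :
    {g | ∃ a₀ ∈ A₀, ∃ γ ∈ Γ, g = a₀ * γ} = Γ ∧
    {g | ∃ a₀ ∈ A₀, ∃ γ ∈ Γ, g = γ * a₀} = Γ :=
  stmt0_general A C Γ hΓ A₀ hA₀
end

section
/- Let G be a group, A, C subgroups with A ∩ C = {1}, Γ := (A*C) ∩ (C*A), and A₀ := A ∩ N(C). For γ ∈ Γ define s_A(γ) := c_L(γ)⁻¹ * a_L(γ). Then: (i) s_A(γ) = a_R(γ) * c_R(γ)⁻¹; (ii) s_A(γ) ∈ Γ; and (iii) for every a₀ ∈ A₀ (so that a₀*γ ∈ Γ and γ*a₀ ∈ Γ), one has s_A(a₀*γ) = a₀ * s_A(γ) and s_A(γ*a₀) = s_A(γ) * a₀. -/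
/-!
Part (i) is the rearrangement `aL γ * cR γ = cL γ * aR γ`. For (iii), uniqueness of
decompositions lets one read off the factors of `a₀ * γ` and `γ * a₀` from
`a₀ * γ = (a₀ * aL γ) * cR γ = (a₀ * cL γ * a₀⁻¹) * (a₀ * aR γ)` and
`γ * a₀ = (aL γ * a₀) * (a₀⁻¹ * cR γ * a₀) = cL γ * (aR γ * a₀)`, where the conjugates lie in
`C` because `a₀` normalizes `C`; the factors `a₀` and `a₀⁻¹` then cancel in `s_A`.
-/

section

variable {G : Type*} [Group G]

theorem inv_mul_eq_mul_inv_of_mul_eq_mul {a b c d : G} (h : a * b = c * d) :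
    c⁻¹ * a = d * b⁻¹ := by
  rw [inv_mul_eq_iff_eq_mul, ← mul_assoc, ← h, mul_inv_cancel_right]

namespace Subgroup

variable {A C : Subgroup G} {a₀ γ : G}

theorem left_factor_eq_of_disjoint (hAC : Disjoint A C) {a c a' c' : G}
    (hdec : a ∈ A ∧ c ∈ C ∧ γ = a * c) (ha' : a' ∈ A) (hc' : c' ∈ C) (h : γ = a' * c') :
    a = a' :=
  congrArg (fun p : A × C => (p.1 : G)) (mul_injective_of_disjoint hAC
    (a₁ := (⟨a, hdec.1⟩, ⟨c, hdec.2.1⟩)) (a₂ := (⟨a', ha'⟩, ⟨c', hc'⟩)) (hdec.2.2.symm.trans h))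

theorem conj_mem_of_mem_normalizer (hN : a₀ ∈ normalizer (C : Set G)) {c : G} (hc : c ∈ C) :
    a₀ * c * a₀⁻¹ ∈ C :=
  (mem_normalizer_iff.mp hN c).mp hc

theorem inv_conj_mem_of_mem_normalizer (hN : a₀ ∈ normalizer (C : Set G)) {c : G}
    (hc : c ∈ C) : a₀⁻¹ * c * a₀ ∈ C :=
  (mem_normalizer_iff''.mp hN c).mp hc

variable (A C) in
def decomposable : Set G :=
  {g | ∃ a ∈ A, ∃ c ∈ C, g = a * c} ∩ {g | ∃ c ∈ C, ∃ a ∈ A, g = c * a}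

theorem mul_mem_decomposable_left (ha₀ : a₀ ∈ A) (hN : a₀ ∈ normalizer (C : Set G))
    (hγ : γ ∈ decomposable A C) : a₀ * γ ∈ decomposable A C := by
  obtain ⟨⟨a, ha, c, hc, rfl⟩, ⟨c', hc', a', ha', h⟩⟩ := hγ
  exact ⟨⟨a₀ * a, A.mul_mem ha₀ ha, c, hc, (mul_assoc _ _ _).symm⟩,
    ⟨_, conj_mem_of_mem_normalizer hN hc', a₀ * a', A.mul_mem ha₀ ha',
      (congrArg (a₀ * ·) h).trans (by group)⟩⟩

theorem mul_mem_decomposable_right (ha₀ : a₀ ∈ A) (hN : a₀ ∈ normalizer (C : Set G))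
    (hγ : γ ∈ decomposable A C) : γ * a₀ ∈ decomposable A C := by
  obtain ⟨⟨a, ha, c, hc, h⟩, ⟨c', hc', a', ha', rfl⟩⟩ := hγ
  exact ⟨⟨a * a₀, A.mul_mem ha ha₀, _, inv_conj_mem_of_mem_normalizer hN hc,
      (congrArg (· * a₀) h).trans (by group)⟩,
    ⟨c', hc', a' * a₀, A.mul_mem ha' ha₀, mul_assoc _ _ _⟩⟩

end Subgroup

end

open Subgroup in
/-- For a trivially intersecting pair of subgroups `A, C ⊆ G` with set of decomposable
elements `Γ = (A*C) ∩ (C*A)`, unique decompositions `γ = aL γ * cR γ = cL γ * aR γ`, and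
`s_A γ := (cL γ)⁻¹ * aL γ`, one has: (i) `s_A γ = aR γ * (cR γ)⁻¹`; (ii) `s_A γ ∈ Γ`;
(iii) for `a₀ ∈ A₀ = A ∩ N(C)` (so that `a₀*γ, γ*a₀ ∈ Γ`),
`s_A (a₀*γ) = a₀ * s_A γ` and `s_A (γ*a₀) = s_A γ * a₀`. -/
theorem stmt1 {G : Type*} [Group G] (A C : Subgroup G)
    (hAC : A ⊓ C = ⊥)
    (Γ : Set G)
    (hΓ : Γ = {g | ∃ a ∈ A, ∃ c ∈ C, g = a * c} ∩ {g | ∃ c ∈ C, ∃ a ∈ A, g = c * a})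
    (aL aR cL cR : G → G)
    (hdecL : ∀ γ ∈ Γ, aL γ ∈ A ∧ cR γ ∈ C ∧ γ = aL γ * cR γ)
    (hdecR : ∀ γ ∈ Γ, cL γ ∈ C ∧ aR γ ∈ A ∧ γ = cL γ * aR γ)
    (sA : G → G) (hsA : ∀ γ, sA γ = (cL γ)⁻¹ * aL γ) :
    (∀ γ ∈ Γ, sA γ = aR γ * (cR γ)⁻¹) ∧
    (∀ γ ∈ Γ, sA γ ∈ Γ) ∧
    (∀ γ ∈ Γ, ∀ a₀ ∈ A ⊓ Subgroup.normalizer (C : Set G),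
      a₀ * γ ∈ Γ ∧ γ * a₀ ∈ Γ ∧ sA (a₀ * γ) = a₀ * sA γ ∧ sA (γ * a₀) = sA γ * a₀) := by
  subst hΓ
  have hAC : Disjoint A C := disjoint_iff.mpr hAC
  have hsA_right : ∀ γ ∈ decomposable A C, sA γ = aR γ * (cR γ)⁻¹ := fun γ hγ => by
    rw [hsA]
    exact inv_mul_eq_mul_inv_of_mul_eq_mul ((hdecL γ hγ).2.2.symm.trans (hdecR γ hγ).2.2)
  refine ⟨hsA_right, fun γ hγ => ?_, fun γ hγ a₀ ⟨ha₀, hN⟩ => ?_⟩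
  · exact ⟨⟨aR γ, (hdecR γ hγ).2.1, _, C.inv_mem (hdecL γ hγ).2.1, hsA_right γ hγ⟩,
      ⟨_, C.inv_mem (hdecR γ hγ).1, aL γ, (hdecL γ hγ).1, hsA γ⟩⟩
  obtain ⟨haL, hcR, hL⟩ := hdecL γ hγ
  obtain ⟨hcL, haR, hR⟩ := hdecR γ hγ
  have hl := mul_mem_decomposable_left ha₀ hN hγ
  have hr := mul_mem_decomposable_right ha₀ hN hγ
  have hcL_left : cL (a₀ * γ) = a₀ * cL γ * a₀⁻¹ :=
    left_factor_eq_of_disjoint hAC.symm (hdecR _ hl) (conj_mem_of_mem_normalizer hN hcL)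
      (A.mul_mem ha₀ haR) ((congrArg (a₀ * ·) hR).trans (by group))
  have haL_left : aL (a₀ * γ) = a₀ * aL γ :=
    left_factor_eq_of_disjoint hAC (hdecL _ hl) (A.mul_mem ha₀ haL) hcR
      ((congrArg (a₀ * ·) hL).trans (mul_assoc _ _ _).symm)
  have hcL_right : cL (γ * a₀) = cL γ :=
    left_factor_eq_of_disjoint hAC.symm (hdecR _ hr) hcL (A.mul_mem haR ha₀)
      ((congrArg (· * a₀) hR).trans (mul_assoc _ _ _))
  have haL_right : aL (γ * a₀) = aL γ * a₀ :=
    left_factor_eq_of_disjoint hAC (hdecL _ hr) (A.mul_mem haL ha₀)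
      (inv_conj_mem_of_mem_normalizer hN hcR) ((congrArg (· * a₀) hL).trans (by group))
  refine ⟨hl, hr, ?_, ?_⟩
  · rw [hsA, hsA, hcL_left, haL_left]
    group
  · rw [hsA, hsA, hcL_right, haL_right, mul_assoc]
end

section
/- Let G be a group, A, C subgroups with A ∩ C = {1}, Γ := (A*C) ∩ (C*A), and A₀ := A ∩ N(C). Then for every a ∈ A₀ and all γ₁, γ₂, γ₃ ∈ Γ, the following two conditions are equivalent: (i) c_R(γ₁) = c_L(γ₂) and γ₃ * a = γ₁ * a_R(γ₂); (ii) c_R(γ₁) = c_L(γ₂ * a⁻¹) and γ₃ = γ₁ * a_R(γ₂ * a⁻¹). (Note γ₂ * a⁻¹ ∈ Γ since multiplication by A₀ preserves Γ.) This expresses the relation equality δ_A ∘ R_a = (id × R_a) ∘ δ_A of Proposition 2.2(3). -/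
/-!
Since `a ∈ A` normalizes `C`, right multiplication by `a⁻¹` preserves `Γ`, and
`γ₂ * a⁻¹ = c_L(γ₂) * (a_R(γ₂) * a⁻¹)` is a `C * A`-decomposition of `γ₂ * a⁻¹`. As `A ∩ C = 1`
such decompositions are unique, so `c_L(γ₂ * a⁻¹) = c_L(γ₂)` and `a_R(γ₂ * a⁻¹) = a_R(γ₂) * a⁻¹`;
the two conditions then differ only by moving `a` across the equation for `γ₃`.
-/

namespace Subgroup

variable {G : Type*} [Group G]

theorem eq_and_eq_of_mul_eq_mul {H K : Subgroup G} (hHK : Disjoint H K) {h₁ h₂ k₁ k₂ : G}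
    (hh₁ : h₁ ∈ H) (hh₂ : h₂ ∈ H) (hk₁ : k₁ ∈ K) (hk₂ : k₂ ∈ K) (e : h₁ * k₁ = h₂ * k₂) :
    h₁ = h₂ ∧ k₁ = k₂ := by
  have := mul_injective_of_disjoint hHK
    (a₁ := (⟨h₁, hh₁⟩, ⟨k₁, hk₁⟩)) (a₂ := (⟨h₂, hh₂⟩, ⟨k₂, hk₂⟩)) e
  simpa [Prod.ext_iff] using this

theorem mul_mem_mul_inter_mul_of_mem_normalizer {A C : Subgroup G} {a g : G}
    (ha : a ∈ A ⊓ normalizer (C : Set G))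
    (hg : g ∈ {g | ∃ a ∈ A, ∃ c ∈ C, g = a * c} ∩ {g | ∃ c ∈ C, ∃ a ∈ A, g = c * a}) :
    g * a ∈ {g | ∃ a ∈ A, ∃ c ∈ C, g = a * c} ∩ {g | ∃ c ∈ C, ∃ a ∈ A, g = c * a} := by
  obtain ⟨haA, haN⟩ := ha
  obtain ⟨⟨a₁, ha₁, c₁, hc₁, rfl⟩, ⟨c₂, hc₂, a₂, ha₂, e₂⟩⟩ := hg
  have hconj : a⁻¹ * c₁ * a⁻¹⁻¹ ∈ C := (mem_normalizer_iff.mp (inv_mem haN) c₁).mp hc₁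
  refine ⟨⟨a₁ * a, mul_mem ha₁ haA, a⁻¹ * c₁ * a⁻¹⁻¹, hconj, by group⟩,
    ⟨c₂, hc₂, a₂ * a, mul_mem ha₂ haA, by rw [e₂, mul_assoc]⟩⟩

end Subgroup

theorem cL_mul_eq_and_aR_mul_eq {G : Type*} [Group G] {A C : Subgroup G} (hCA : Disjoint C A)
    {Γ : Set G} {aR cL : G → G} (hdecR : ∀ γ ∈ Γ, cL γ ∈ C ∧ aR γ ∈ A ∧ γ = cL γ * aR γ)
    {γ b : G} (hγ : γ ∈ Γ) (hγb : γ * b ∈ Γ) (hb : b ∈ A) :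
    cL (γ * b) = cL γ ∧ aR (γ * b) = aR γ * b := by
  obtain ⟨hc, ha, e⟩ := hdecR γ hγ
  obtain ⟨hc', ha', e'⟩ := hdecR (γ * b) hγb
  refine Subgroup.eq_and_eq_of_mul_eq_mul hCA hc' hc ha' (mul_mem ha hb) ?_
  rw [← e', ← mul_assoc, ← e]

theorem stmt2_general {G : Type*} [Group G] (A C : Subgroup G)
    (hAC : A ⊓ C = ⊥)
    (Γ : Set G)
    (hΓ : Γ = {g | ∃ a ∈ A, ∃ c ∈ C, g = a * c} ∩ {g | ∃ c ∈ C, ∃ a ∈ A, g = c * a})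
    (aR cL cR : G → G)
    (hdecR : ∀ γ ∈ Γ, cL γ ∈ C ∧ aR γ ∈ A ∧ γ = cL γ * aR γ) :
    ∀ a ∈ A ⊓ Subgroup.normalizer (C : Set G), ∀ γ₁ ∈ Γ, ∀ γ₂ ∈ Γ, ∀ γ₃ ∈ Γ,
      ((cR γ₁ = cL γ₂ ∧ γ₃ * a = γ₁ * aR γ₂) ↔
       (cR γ₁ = cL (γ₂ * a⁻¹) ∧ γ₃ = γ₁ * aR (γ₂ * a⁻¹))) := by
  intro a ha γ₁ _ γ₂ hγ₂ γ₃ _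
  have hγ₂a : γ₂ * a⁻¹ ∈ Γ := by
    subst hΓ
    exact Subgroup.mul_mem_mul_inter_mul_of_mem_normalizer (inv_mem ha) hγ₂
  obtain ⟨hcL, haR⟩ :=
    cL_mul_eq_and_aR_mul_eq (disjoint_iff.mpr hAC).symm hdecR hγ₂ hγ₂a (inv_mem ha.1)
  rw [hcL, haR, ← mul_assoc, eq_mul_inv_iff_mul_eq]

/-- Proposition 2.2 (3): the relation equality `δ_A ∘ R_a = (id × R_a) ∘ δ_A`, stated
pointwise: for `a ∈ A₀ = A ∩ N(C)` and `γ₁, γ₂, γ₃ ∈ Γ = (A*C) ∩ (C*A)`, the conditions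
`c_R(γ₁) = c_L(γ₂) ∧ γ₃ * a = γ₁ * a_R(γ₂)` and
`c_R(γ₁) = c_L(γ₂ * a⁻¹) ∧ γ₃ = γ₁ * a_R(γ₂ * a⁻¹)` are equivalent. -/
theorem stmt2 {G : Type*} [Group G] (A C : Subgroup G)
    (hAC : A ⊓ C = ⊥)
    (Γ : Set G)
    (hΓ : Γ = {g | ∃ a ∈ A, ∃ c ∈ C, g = a * c} ∩ {g | ∃ c ∈ C, ∃ a ∈ A, g = c * a})
    (aL aR cL cR : G → G)
    (hdecL : ∀ γ ∈ Γ, aL γ ∈ A ∧ cR γ ∈ C ∧ γ = aL γ * cR γ)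
    (hdecR : ∀ γ ∈ Γ, cL γ ∈ C ∧ aR γ ∈ A ∧ γ = cL γ * aR γ) :
    ∀ a ∈ A ⊓ Subgroup.normalizer (C : Set G), ∀ γ₁ ∈ Γ, ∀ γ₂ ∈ Γ, ∀ γ₃ ∈ Γ,
      ((cR γ₁ = cL γ₂ ∧ γ₃ * a = γ₁ * aR γ₂) ↔
       (cR γ₁ = cL (γ₂ * a⁻¹) ∧ γ₃ = γ₁ * aR (γ₂ * a⁻¹))) :=
  stmt2_general A C hAC Γ hΓ aR cL cR hdecR
end

section
/- Let Γ and Z be sets, δ a relation from Γ to Γ × Γ that is coassociative, i.e. (id × δ) ∘ δ = (δ × id) ∘ δ, and let π : Γ → Z be a surjection with associated equivalence relation h := πᵀ ∘ π. Assume (id × h) ∘ δ ∘ πᵀ = δ ∘ πᵀ (as relations from Z to Γ × Γ). Define the relation δ_Z := (id × π) ∘ δ ∘ πᵀ from Z to Γ × Z. Then (δ × id) ∘ δ_Z = (id × δ_Z) ∘ δ_Z (as relations from Z to Γ × Γ × Z). -/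
/-!
Both sides describe splittings of a lift `γ ∈ π⁻¹ z` into three pieces. Going from `(δ × id) ∘ δ_Z`
to `(id × δ_Z) ∘ δ_Z` is just coassociativity of `δ` at `γ`. Conversely, an element of
`(id × δ_Z) ∘ δ_Z` consists of a splitting `δ γ (g₁, c)` and a splitting `δ γ' (g₂, d)` with
`π c = π γ'` only; the invariance of `δ ∘ πᵀ` under `id × h` replaces `γ` by a lift `γ₁` of `z` with
`δ γ₁ (g₁, γ')`, after which coassociativity applies at `γ₁`.
-/

namespace RelCoproduct

variable {Γ Z : Type*}

def Coassociative (δ : Γ → Γ × Γ → Prop) : Prop :=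
  ∀ γ g₁ g₂ g₃, (∃ b, δ γ (g₁, b) ∧ δ b (g₂, g₃)) ↔ (∃ a, δ γ (a, g₃) ∧ δ a (g₁, g₂))

/-- The relation `(id × π) ∘ δ ∘ πᵀ : Z ⇸ Γ × Z`. -/
def pushCoproduct (δ : Γ → Γ × Γ → Prop) (π : Γ → Z) (z : Z) (p : Γ × Z) : Prop :=
  ∃ γ g, π γ = z ∧ δ γ (p.1, g) ∧ π g = p.2

variable {δ : Γ → Γ × Γ → Prop} {π : Γ → Z}

theorem pushCoproduct_comp_of_coassociative (hδ : Coassociative δ) {z : Z} {g₁ g₂ : Γ} {w : Z}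
    (h : ∃ a, pushCoproduct δ π z (a, w) ∧ δ a (g₁, g₂)) :
    ∃ z', pushCoproduct δ π z (g₁, z') ∧ pushCoproduct δ π z' (g₂, w) := by
  obtain ⟨a, ⟨γ, b, hγz, hγ, hbw⟩, ha⟩ := h
  obtain ⟨b', hγb', hb'⟩ := (hδ γ g₁ g₂ b).mpr ⟨a, hγ, ha⟩
  exact ⟨π b', ⟨γ, b', hγz, hγb', rfl⟩, ⟨b', b, rfl, hb', hbw⟩⟩

theorem comp_pushCoproduct_of_coassociative (hδ : Coassociative δ)
    (hsat : ∀ z g₁ g₂, pushCoproduct δ π z (g₁, π g₂) → ∃ γ, π γ = z ∧ δ γ (g₁, g₂))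
    {z : Z} {g₁ g₂ : Γ} {w : Z}
    (h : ∃ z', pushCoproduct δ π z (g₁, z') ∧ pushCoproduct δ π z' (g₂, w)) :
    ∃ a, pushCoproduct δ π z (a, w) ∧ δ a (g₁, g₂) := by
  obtain ⟨z', ⟨γ, c, hγz, hγ, hcz'⟩, ⟨γ', d, hγ'z', hγ', hdw⟩⟩ := h
  obtain ⟨γ₁, hγ₁z, hγ₁⟩ := hsat z g₁ γ' ⟨γ, c, hγz, hγ, hcz'.trans hγ'z'.symm⟩
  obtain ⟨a, hγ₁a, ha⟩ := (hδ γ₁ g₁ g₂ d).mp ⟨γ', hγ₁, hγ'⟩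
  exact ⟨a, ⟨γ₁, d, hγ₁z, hγ₁a, hdw⟩, ha⟩

end RelCoproduct

open RelCoproduct in
theorem stmt6_general {Γ Z : Type*}
    (δ : Γ → Γ × Γ → Prop)
    (hcoassoc : ∀ γ g₁ g₂ g₃,
      (∃ b, δ γ (g₁, b) ∧ δ b (g₂, g₃)) ↔ (∃ a, δ γ (a, g₃) ∧ δ a (g₁, g₂)))
    (π : Γ → Z)
    (hinv : ∀ (z : Z) (g₁ g₂ : Γ),
      (∃ γ g₂', π γ = z ∧ δ γ (g₁, g₂') ∧ π g₂' = π g₂) ↔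
      (∃ γ, π γ = z ∧ δ γ (g₁, g₂)))
    (δZ : Z → Γ × Z → Prop)
    (hδZ : ∀ (z : Z) (g : Γ) (w : Z),
      δZ z (g, w) ↔ ∃ γ g₂, π γ = z ∧ δ γ (g, g₂) ∧ π g₂ = w) :
    ∀ (z : Z) (g₁ g₂ : Γ) (w : Z),
      (∃ a, δZ z (a, w) ∧ δ a (g₁, g₂)) ↔
      (∃ z', δZ z (g₁, z') ∧ δZ z' (g₂, w)) := by
  obtain rfl : δZ = pushCoproduct δ π := by
    funext z ⟨g, w⟩
    exact propext (hδZ z g w)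
  intro z g₁ g₂ w
  exact ⟨pushCoproduct_comp_of_coassociative hcoassoc,
    comp_pushCoproduct_of_coassociative hcoassoc fun z g₁ g₂ => (hinv z g₁ g₂).mp⟩

/-- Equation (6): if `δ : Γ ⇸ Γ × Γ` is coassociative, `π : Γ → Z` is a surjection with
equivalence relation `h = πᵀ ∘ π` satisfying `(id × h) ∘ δ ∘ πᵀ = δ ∘ πᵀ` (hypothesis
`hinv`), then the relation `δ_Z := (id × π) ∘ δ ∘ πᵀ` satisfies
`(δ × id) ∘ δ_Z = (id × δ_Z) ∘ δ_Z`. -/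
theorem stmt6 {Γ Z : Type*}
    (δ : Γ → Γ × Γ → Prop)
    (hcoassoc : ∀ γ g₁ g₂ g₃,
      (∃ b, δ γ (g₁, b) ∧ δ b (g₂, g₃)) ↔ (∃ a, δ γ (a, g₃) ∧ δ a (g₁, g₂)))
    (π : Γ → Z) (hπ : Function.Surjective π)
    (hinv : ∀ (z : Z) (g₁ g₂ : Γ),
      (∃ γ g₂', π γ = z ∧ δ γ (g₁, g₂') ∧ π g₂' = π g₂) ↔
      (∃ γ, π γ = z ∧ δ γ (g₁, g₂)))
    (δZ : Z → Γ × Z → Prop)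
    (hδZ : ∀ (z : Z) (g : Γ) (w : Z),
      δZ z (g, w) ↔ ∃ γ g₂, π γ = z ∧ δ γ (g, g₂) ∧ π g₂ = w) :
    ∀ (z : Z) (g₁ g₂ : Γ) (w : Z),
      (∃ a, δZ z (a, w) ∧ δ a (g₁, g₂)) ↔
      (∃ z', δZ z (g₁, z') ∧ δZ z' (g₂, w)) :=
  stmt6_general δ hcoassoc π hinv δZ hδZ
end

section
/- Let Γ be a groupoid (a category in which every morphism is invertible) and Φ a group acting on Γ by automorphisms: a group homomorphism φ ↦ F_φ into invertible functors Γ → Γ (bijective on objects and on morphisms). Assume condition (7): for every φ ∈ Φ and every object e, if F_φ(e) = e then F_φ fixes every morphism whose source or target is e. Then the multiplication induced on Φ-orbits of morphisms is well defined: for all morphisms f : a ⟶ b and g : b ⟶ c of Γ and all φ, ψ ∈ Φ such that F_φ(f) and F_ψ(g) are composable (i.e. F_φ(b) = F_ψ(b)), there exists χ ∈ Φ with F_χ(f ≫ g) = F_φ(f) ≫ F_ψ(g). -/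
/-!
Given `F_φ(b) = F_ψ(b)`, the element `θ = ψ⁻¹φ` fixes `b`, so by condition (7) it fixes `f`
together with its end points. Since `F_φ = F_ψ ∘ F_θ`, this gives `F_φ(f) = F_ψ(f)`,
and `χ = ψ` works: `F_ψ(f ≫ g) = F_ψ(f) ≫ F_ψ(g) = F_φ(f) ≫ F_ψ(g)`.
-/

open CategoryTheory

section FunctorAction

variable {C : Type*} [Category C] {Φ : Type*} [Group Φ] (F : Φ → C ⥤ C)

lemma functor_eq_inv_mul_comp (hmul : ∀ φ ψ : Φ, F (φ * ψ) = F ψ ⋙ F φ) (φ ψ : Φ) :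
    F φ = F (ψ⁻¹ * φ) ⋙ F ψ := by
  rw [← hmul, mul_inv_cancel_left]

lemma obj_inv_mul_eq_self (hone : F 1 = 𝟭 C) (hmul : ∀ φ ψ : Φ, F (φ * ψ) = F ψ ⋙ F φ)
    {φ ψ : Φ} {b : C} (hb : (F φ).obj b = (F ψ).obj b) : (F (ψ⁻¹ * φ)).obj b = b := by
  calc (F (ψ⁻¹ * φ)).obj b = (F ψ⁻¹).obj ((F φ).obj b) := Functor.congr_obj (hmul _ _) b
    _ = (F ψ⁻¹).obj ((F ψ).obj b) := by rw [hb]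
    _ = (F (ψ⁻¹ * ψ)).obj b := (Functor.congr_obj (hmul _ _) b).symm
    _ = b := by rw [inv_mul_cancel, hone, Functor.id_obj]

end FunctorAction

theorem stmt7_general {Γ : Type*} [Groupoid Γ] {Φ : Type*} [Group Φ]
    (F : Φ → Γ ⥤ Γ)
    (hone : F 1 = Functor.id Γ)
    (hmul : ∀ φ ψ : Φ, F (φ * ψ) = F ψ ⋙ F φ)
    (cond7 : ∀ (φ : Φ) (e : Γ), (F φ).obj e = e →
      ∀ (a b : Γ) (f : a ⟶ b), a = e ∨ b = e →
        (F φ).obj a = a ∧ (F φ).obj b = b ∧ HEq ((F φ).map f) f) :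
    ∀ (a b c : Γ) (f : a ⟶ b) (g : b ⟶ c) (φ ψ : Φ)
      (hb : (F φ).obj b = (F ψ).obj b),
      ∃ χ : Φ, (F χ).obj a = (F φ).obj a ∧ (F χ).obj c = (F ψ).obj c ∧
        HEq ((F χ).map (f ≫ g)) ((F φ).map f ≫ eqToHom hb ≫ (F ψ).map g) := by
  intro a b c f g φ ψ hb
  have hθb := obj_inv_mul_eq_self F hone hmul hb
  obtain ⟨hθa, -, hθf⟩ := cond7 _ b hθb a b f (Or.inr rfl)
  have hφ := functor_eq_inv_mul_comp F hmul φ ψ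
  have hφa : (F φ).obj a = (F ψ).obj a := by rw [hφ, Functor.comp_obj, hθa]
  have hφf : (F φ).map f ≍ (F ψ).map f := by
    rw [hφ]; exact Functor.postcomp_map_heq (G := 𝟭 Γ) (F ψ) hθa hθb hθf
  refine ⟨ψ, hφa.symm, rfl, ?_⟩
  rw [(F ψ).map_comp]
  exact heq_comp hφa.symm hb.symm rfl hφf.symm (eqToHom_comp_heq _ hb).symm

/-- Proposition 2.5 (key step): for a group `Φ` acting by automorphisms on a groupoid `Γ`
and satisfying condition (7) (if `F_φ` fixes an object `e`, it fixes every morphism with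
source or target `e`), the multiplication induced on `Φ`-orbits of morphisms is well
defined: whenever `F_φ(f)` and `F_ψ(g)` are composable, their composite lies in the orbit
of `f ≫ g`, i.e. there is `χ ∈ Φ` with `F_χ(f ≫ g) = F_φ(f) ≫ F_ψ(g)`. -/
theorem stmt7 {Γ : Type*} [Groupoid Γ] {Φ : Type*} [Group Φ]
    (F : Φ → Γ ⥤ Γ)
    (hone : F 1 = Functor.id Γ)
    (hmul : ∀ φ ψ : Φ, F (φ * ψ) = F ψ ⋙ F φ)
    (hobj : ∀ φ : Φ, Function.Bijective (F φ).obj)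
    (hmap : ∀ (φ : Φ) (a b : Γ), Function.Bijective (fun f : a ⟶ b => (F φ).map f))
    (cond7 : ∀ (φ : Φ) (e : Γ), (F φ).obj e = e →
      ∀ (a b : Γ) (f : a ⟶ b), a = e ∨ b = e →
        (F φ).obj a = a ∧ (F φ).obj b = b ∧ HEq ((F φ).map f) f) :
    ∀ (a b c : Γ) (f : a ⟶ b) (g : b ⟶ c) (φ ψ : Φ)
      (hb : (F φ).obj b = (F ψ).obj b),
      ∃ χ : Φ, (F χ).obj a = (F φ).obj a ∧ (F χ).obj c = (F ψ).obj c ∧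
        HEq ((F χ).map (f ≫ g)) ((F φ).map f ≫ eqToHom hb ≫ (F ψ).map g) :=
  stmt7_general F hone hmul cond7
end

section
/- Let Γ be a groupoid (a category in which every morphism is invertible) and Φ a group acting on Γ by automorphisms, via φ ↦ F_φ. The following conditions are equivalent: (1) for every φ ∈ Φ and every object e with F_φ(e) = e, F_φ fixes every morphism whose source or target is e; (2) for every φ ∈ Φ and every object e with F_φ(e) = e, F_φ fixes every morphism with target e; (3) for every φ ∈ Φ and every object e with F_φ(e) = e, F_φ fixes every morphism with source e; (4) any two morphisms γ, γ' lying in the same transitive component of Γ (i.e. whose sources are connected by a morphism of Γ) have equal isotropy groups {φ ∈ Φ : F_φ(γ) = γ} = {φ ∈ Φ : F_φ(γ') = γ'}. -/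
/-!
Fixing a morphism is stable under inversion, which exchanges conditions (2) and (3). Under (3),
an automorphism fixes a morphism as soon as it fixes its source, and fixing an object propagates
along any morphism out of it, so isotropy is constant on transitive components. Conversely,
comparing a morphism at `e` with the identity of `e` recovers (1) from (4).
-/

open CategoryTheory

/-- `FixesHom F f` means the endofunctor `F` fixes the morphism `f` (as an element of the
disjoint union of all hom-sets): it fixes its source, its target, and `f` itself. -/
def FixesHom {Γ : Type*} [Groupoid Γ] (F : Γ ⥤ Γ) {a b : Γ} (f : a ⟶ b) : Prop :=
  F.obj a = a ∧ F.obj b = b ∧ HEq (F.map f) f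

namespace FixesHom

variable {Γ : Type*} [Groupoid Γ] {F : Γ ⥤ Γ}

lemma id_of_obj_eq {e : Γ} (he : F.obj e = e) : FixesHom F (𝟙 e) :=
  ⟨he, he, by rw [F.map_id, ← conj_eqToHom_iff_heq _ _ he he]; simp⟩

lemma inv {a b : Γ} {f : a ⟶ b} (h : FixesHom F f) : FixesHom F (Groupoid.inv f) := by
  obtain ⟨ha, hb, hf⟩ := h
  refine ⟨hb, ha, ?_⟩
  rw [← conj_eqToHom_iff_heq _ _ ha hb] at hf
  rw [← conj_eqToHom_iff_heq _ _ hb ha, Groupoid.inv_eq_inv, F.map_inv]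
  simp [hf]

lemma inv_iff {a b : Γ} {f : a ⟶ b} : FixesHom F (Groupoid.inv f) ↔ FixesHom F f :=
  ⟨fun h => by simpa using h.inv, inv⟩

end FixesHom

theorem stmt8_general {Γ : Type*} [Groupoid Γ] {Φ : Type*}
    (F : Φ → Γ ⥤ Γ) :
    List.TFAE [
      ∀ (φ : Φ) (e : Γ), (F φ).obj e = e →
        ∀ (a b : Γ) (f : a ⟶ b), a = e ∨ b = e → FixesHom (F φ) f,
      ∀ (φ : Φ) (e : Γ), (F φ).obj e = e →
        ∀ (a : Γ) (f : a ⟶ e), FixesHom (F φ) f,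
      ∀ (φ : Φ) (e : Γ), (F φ).obj e = e →
        ∀ (b : Γ) (f : e ⟶ b), FixesHom (F φ) f,
      ∀ (a b a' b' : Γ) (f : a ⟶ b) (f' : a' ⟶ b'), Nonempty (a ⟶ a') →
        ∀ φ : Φ, (FixesHom (F φ) f ↔ FixesHom (F φ) f')] := by
  tfae_have 1 → 2 := fun h φ e he a f => h φ e he a e f (Or.inr rfl)
  tfae_have 2 → 3 := fun h φ e he b f => FixesHom.inv_iff.mp (h φ e he b (Groupoid.inv f))
  tfae_have 3 → 4 := by
    rintro h a b a' b' f f' ⟨g⟩ φ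
    constructor
    · rintro ⟨ha, -, -⟩
      exact h φ a' (h φ a ha a' g).2.1 b' f'
    · rintro ⟨ha', -, -⟩
      exact h φ a (h φ a' ha' a (Groupoid.inv g)).2.1 b f
  tfae_have 4 → 1 := by
    intro h φ e he a b f hae
    have : Nonempty (a ⟶ e) := by
      rcases hae with rfl | rfl
      exacts [⟨𝟙 a⟩, ⟨f⟩]
    exact (h a b e e f (𝟙 e) this φ).mpr (FixesHom.id_of_obj_eq he)
  tfae_finish

/-- Lemma 2.6: for a group `Φ` acting by automorphisms on a groupoid `Γ`, the following
are equivalent: (1) if `F_φ` fixes an object `e`, it fixes every morphism with source or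
target `e`; (2) the same with "target `e`"; (3) the same with "source `e`"; (4) any two
morphisms lying in the same transitive component (sources connected by a morphism) have
equal isotropy groups in `Φ`. -/
theorem stmt8 {Γ : Type*} [Groupoid Γ] {Φ : Type*} [Group Φ]
    (F : Φ → Γ ⥤ Γ)
    (hone : F 1 = Functor.id Γ)
    (hmul : ∀ φ ψ : Φ, F (φ * ψ) = F ψ ⋙ F φ)
    (hobj : ∀ φ : Φ, Function.Bijective (F φ).obj)
    (hmap : ∀ (φ : Φ) (a b : Γ), Function.Bijective (fun f : a ⟶ b => (F φ).map f)) :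
    List.TFAE [
      ∀ (φ : Φ) (e : Γ), (F φ).obj e = e →
        ∀ (a b : Γ) (f : a ⟶ b), a = e ∨ b = e → FixesHom (F φ) f,
      ∀ (φ : Φ) (e : Γ), (F φ).obj e = e →
        ∀ (a : Γ) (f : a ⟶ e), FixesHom (F φ) f,
      ∀ (φ : Φ) (e : Γ), (F φ).obj e = e →
        ∀ (b : Γ) (f : e ⟶ b), FixesHom (F φ) f,
      ∀ (a b a' b' : Γ) (f : a ⟶ b) (f' : a' ⟶ b'), Nonempty (a ⟶ a') →
        ∀ φ : Φ, (FixesHom (F φ) f ↔ FixesHom (F φ) f')] :=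
  stmt8_general F
end

section
/- For x, ẋ ∈ ℝⁿ (with the Euclidean norm) and s > 0, define the map ŝ(x, ẋ, s) := (x', ẋ', s') where x' := s·x − (2/(1+‖x‖²))·ẋ, ẋ' := −((1+‖x'‖²)/((1+‖x‖²)·s))·ẋ, and s' := 1/s. Then ŝ is an involution: ŝ(ŝ(x, ẋ, s)) = (x, ẋ, s) for all x, ẋ ∈ ℝⁿ and s > 0. -/
/-- The groupoid inverse `ŝ` of formula (27), in stereographic coordinates on
`Z₁ = ℝⁿ × ℝⁿ × ℝ₊`. -/
noncomputable def sHat {n : ℕ}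
    (z : EuclideanSpace ℝ (Fin n) × EuclideanSpace ℝ (Fin n) × ℝ) :
    EuclideanSpace ℝ (Fin n) × EuclideanSpace ℝ (Fin n) × ℝ :=
  let x := z.1
  let v := z.2.1
  let s := z.2.2
  let x' := s • x - (2 / (1 + ‖x‖ ^ 2)) • v
  (x', -((1 + ‖x'‖ ^ 2) / ((1 + ‖x‖ ^ 2) * s)) • v, 1 / s)

/-! Only the fact that the conformal factor `a = 1 + ‖x‖²` never vanishes matters: applying `ŝ`
twice, the two corrections `∓ 2 / (a s) • v` of the first component cancel, the two scalars
multiplying `v` have product `1`, and `1 / (1 / s) = s`. -/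

section WeightedInv

variable {K E : Type*} [Field K] [AddCommGroup E] [Module K E]

def weightedInv (φ : E → K) (z : E × E × K) : E × E × K :=
  let x' := z.2.2 • z.1 - (2 / φ z.1) • z.2.1
  (x', -(φ x' / (φ z.1 * z.2.2)) • z.2.1, 1 / z.2.2)

theorem one_div_smul_sub_div_smul_neg_smul {a b s : K} (hb : b ≠ 0) (hs : s ≠ 0) (x v : E) :
    (1 / s) • (s • x - (2 / a) • v) - (2 / b) • (-(b / (a * s)) • v) = x := by
  match_scalars
  · field_simp
  · field_simp; ring

theorem div_mul_one_div_mul_div {a b s : K} (ha : a ≠ 0) (hb : b ≠ 0) (hs : s ≠ 0) :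
    -(a / (b * (1 / s))) * -(b / (a * s)) = 1 := by
  field_simp

theorem weightedInv_weightedInv {φ : E → K} (hφ : ∀ x, φ x ≠ 0) (x v : E) {s : K} (hs : s ≠ 0) :
    weightedInv φ (weightedInv φ (x, v, s)) = (x, v, s) := by
  set x' := s • x - (2 / φ x) • v
  have hx : (1 / s) • x' - (2 / φ x') • (-(φ x' / (φ x * s)) • v) = x :=
    one_div_smul_sub_div_smul_neg_smul (hφ _) hs x v
  simp only [weightedInv]
  rw [hx, smul_smul, div_mul_one_div_mul_div (hφ _) (hφ _) hs, one_smul, one_div_one_div]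

end WeightedInv

theorem sHat_eq_weightedInv {n : ℕ} (z : EuclideanSpace ℝ (Fin n) × EuclideanSpace ℝ (Fin n) × ℝ) :
    sHat z = weightedInv (fun x => 1 + ‖x‖ ^ 2) z :=
  rfl

/-- The map `ŝ` of formula (27) is an involution on `Z₁ = ℝⁿ × ℝⁿ × ℝ₊`. -/
theorem stmt9 {n : ℕ} (x v : EuclideanSpace ℝ (Fin n)) (s : ℝ) (hs : 0 < s) :
    sHat (sHat (x, v, s)) = (x, v, s) := by
  simp only [sHat_eq_weightedInv]
  exact weightedInv_weightedInv (fun x => by positivity) x v hs.ne'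
end

section
/- Let p, v ∈ ℝ^{n+1} (with the standard Euclidean inner product) satisfy ‖p‖ = 1 and ⟨p, v⟩ = 0, and let s > 0. Write α for the last coordinate of p and r for the last coordinate of v. Then (1 − α)·(‖v‖² + 1) + (1 + α)·s² − 2·r·s > 0. (Equivalently, the quantity M of the paper, M := (1/(2s²))·[(1−α)(‖v‖²+1) + (1+α)s² − 2rs], is strictly positive on TSⁿ × ℝ₊.) -/
/-!
Put `a = pₙ`, `r = vₙ`. Projecting the unit coordinate vector `e` orthogonally to `p` gives
`q = e - a p` with `‖q‖² = 1 - a²` and `⟪q, v⟫ = r` (as `v ⊥ p`), so Cauchy–Schwarz yields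
`r² ≤ (1 - a²)‖v‖²`. Hence `(rs)² ≤ ((1 - a)‖v‖²)((1 + a)s²)`, and AM–GM bounds `2rs` by
`(1 - a)‖v‖² + (1 + a)s²`, leaving `1 - a ≥ 0` in the expression; at `a = 1` it is `2s² > 0`.
-/

open RealInnerProductSpace

lemma quadratic_form_pos_of_sq_le {a r V s : ℝ} (ha : a ^ 2 ≤ 1) (hr : r ^ 2 ≤ (1 - a ^ 2) * V ^ 2)
    (hs : 0 < s) : 0 < (1 - a) * (V ^ 2 + 1) + (1 + a) * s ^ 2 - 2 * r * s := by
  obtain ⟨ha₁, ha₂⟩ := abs_le.1 ((sq_le_one_iff_abs_le_one a).1 ha)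
  have hrs : 2 * (r * s) ≤ (1 - a) * V ^ 2 + (1 + a) * s ^ 2 := by
    refine two_mul_le_add_of_sq_le_mul (by nlinarith) (by nlinarith) ?_
    calc (r * s) ^ 2 = r ^ 2 * s ^ 2 := by ring
      _ ≤ (1 - a ^ 2) * V ^ 2 * s ^ 2 := by gcongr
      _ = (1 - a) * V ^ 2 * ((1 + a) * s ^ 2) := by ring
  rcases ha₂.lt_or_eq with ha₂ | rfl
  · linarith
  · have hr0 : r = 0 := by nlinarith
    subst hr0
    nlinarith

lemma inner_sq_le_of_inner_eq_zero {E : Type*} [NormedAddCommGroup E] [InnerProductSpace ℝ E]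
    {e p v : E} (hp : ‖p‖ = 1) (hpv : ⟪p, v⟫ = 0) :
    ⟪e, v⟫ ^ 2 ≤ (‖e‖ ^ 2 - ⟪e, p⟫ ^ 2) * ‖v‖ ^ 2 := by
  set q := e - ⟪e, p⟫ • p
  have hqv : ⟪q, v⟫ = ⟪e, v⟫ := by
    simp only [q, inner_sub_left, real_inner_smul_left, hpv, mul_zero, sub_zero]
  have hq : ‖q‖ ^ 2 = ‖e‖ ^ 2 - ⟪e, p⟫ ^ 2 := by
    rw [norm_sub_sq_real, real_inner_smul_right, norm_smul, hp, Real.norm_eq_abs]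
    nlinarith [sq_abs ⟪e, p⟫]
  have hcs := real_inner_mul_inner_self_le q v
  rw [hqv, real_inner_self_eq_norm_sq, real_inner_self_eq_norm_sq, hq] at hcs
  nlinarith

/-- Positivity of the quantity `M` of formula (28): for `(p, v) ∈ TSⁿ` (so `‖p‖ = 1`,
`⟨p, v⟩ = 0`) and `s > 0`, writing `α` and `r` for the last coordinates of `p` and `v`,
one has `(1 − α)(‖v‖² + 1) + (1 + α)s² − 2rs > 0`. -/
theorem stmt13 {n : ℕ} (p v : EuclideanSpace ℝ (Fin (n + 1))) (s : ℝ)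
    (hp : ‖p‖ = 1) (hpv : (inner ℝ p v : ℝ) = 0) (hs : 0 < s) :
    0 < (1 - p (Fin.last n)) * (‖v‖ ^ 2 + 1) + (1 + p (Fin.last n)) * s ^ 2 -
        2 * v (Fin.last n) * s := by
  set e := EuclideanSpace.single (Fin.last n) (1 : ℝ)
  have he : ‖e‖ = 1 := by simp [e]
  have hep : ⟪e, p⟫ = p (Fin.last n) := by simp [e, EuclideanSpace.inner_single_left]
  have hev : ⟪e, v⟫ = v (Fin.last n) := by simp [e, EuclideanSpace.inner_single_left]
  refine quadratic_form_pos_of_sq_le ?_ ?_ hs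
  · rw [sq_le_one_iff_abs_le_one, ← hep]
    simpa [he, hp] using abs_real_inner_le_norm e p
  · simpa [he, hep, hev] using inner_sq_le_of_inner_eq_zero (e := e) hp hpv
end
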